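/- Let 𝒢 be a family of connected non-trivial graphs on a common vertex set V and let ℋ be a family of non-trivial graphs on a common vertex set V'. Then for any G ∈ 𝒢, Sd(𝒢⊙ℋ) = Sd(G⊙ℋ). -/

import Mathlib

open SimpleGraph

/-- `S` is a metric generator for `G`: every pair of distinct vertices is
distinguished by some element of `S` via the shortest-path distance. -/
def IsMetricGen {V : Type*} (G : SimpleGraph V) (S : Set V) : Prop :=
  ∀ u v : V, u ≠ v → ∃ s ∈ S, G.dist s u ≠ G.dist s v

/-- `S` is an adjacency generator for `G`. -/
def IsAdjGen {V : Type*} (G : SimpleGraph V) (S : Set V) : Prop :=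
  ∀ x y : V, x ∉ S → y ∉ S → x ≠ y → ∃ s ∈ S, Xor' (G.Adj s x) (G.Adj s y)

/-- `S` is a simultaneous metric generator for the family `𝒢`. -/
def IsSimMetricGen {V : Type*} (𝒢 : Set (SimpleGraph V)) (S : Set V) : Prop :=
  ∀ G ∈ 𝒢, IsMetricGen G S

/-- `S` is a simultaneous adjacency generator for the family `ℋ`. -/
def IsSimAdjGen {V : Type*} (ℋ : Set (SimpleGraph V)) (S : Set V) : Prop :=
  ∀ H ∈ ℋ, IsAdjGen H S

/-- The simultaneous metric dimension of a family of graphs. -/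
noncomputable def Sd {V : Type*} (𝒢 : Set (SimpleGraph V)) : ℕ :=
  sInf {n | ∃ S : Set V, S.ncard = n ∧ IsSimMetricGen 𝒢 S}

/-- The simultaneous adjacency dimension of a family of graphs. -/
noncomputable def SdA {V : Type*} (ℋ : Set (SimpleGraph V)) : ℕ :=
  sInf {n | ∃ S : Set V, S.ncard = n ∧ IsSimAdjGen ℋ S}

/-- The adjacency dimension of a graph. -/
noncomputable def adjDim {V : Type*} (G : SimpleGraph V) : ℕ := SdA {G}

/-- `B` is an adjacency basis of `G`. -/
def IsAdjBasis {V : Type*} (G : SimpleGraph V) (B : Set V) : Prop :=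
  IsAdjGen G B ∧ B.ncard = adjDim G

/-- `B` is a simultaneous adjacency basis of the family `ℋ`. -/
def IsSimAdjBasis {V : Type*} (ℋ : Set (SimpleGraph V)) (B : Set V) : Prop :=
  IsSimAdjGen ℋ B ∧ B.ncard = SdA ℋ

/-- `D` is a dominating set of `G`. -/
def IsDomSet {V : Type*} (G : SimpleGraph V) (D : Set V) : Prop :=
  ∀ v ∉ D, ∃ u ∈ D, G.Adj u v

/-- `D` is a simultaneous dominating set of the family `𝒢`. -/
def IsSimDomSet {V : Type*} (𝒢 : Set (SimpleGraph V)) (D : Set V) : Prop :=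
  ∀ G ∈ 𝒢, IsDomSet G D

/-- The simultaneous domination number of a family of graphs. -/
noncomputable def Sgamma {V : Type*} (𝒢 : Set (SimpleGraph V)) : ℕ :=
  sInf {n | ∃ D : Set V, D.ncard = n ∧ IsSimDomSet 𝒢 D}

/-- The domination number of a graph. -/
noncomputable def domNum {V : Type*} (G : SimpleGraph V) : ℕ := Sgamma {G}

/-- `γ'(G) = min over vertices `v` of `γ(G - v)`. -/
noncomputable def gammaPrime {V : Type*} (G : SimpleGraph V) : ℕ :=
  sInf {n | ∃ v : V, n = domNum (G.induce {v}ᶜ)}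

/-- The corona product `G ⊙ H`: one copy of `G` together with a copy of `H`
for each vertex `i` of `G`, joining `i` to every vertex of its copy. -/
def corona {V V' : Type*} (G : SimpleGraph V) (H : SimpleGraph V') :
    SimpleGraph (V ⊕ V × V') where
  Adj x y :=
    match x, y with
    | Sum.inl i, Sum.inl j => G.Adj i j
    | Sum.inl i, Sum.inr p => i = p.1
    | Sum.inr p, Sum.inl j => p.1 = j
    | Sum.inr p, Sum.inr q => p.1 = q.1 ∧ H.Adj p.2 q.2
  symm := by
    constructor
    rintro (i | p) (j | q) h
    · exact G.symm.symm _ _ h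
    · exact h.symm
    · exact h.symm
    · exact ⟨h.1.symm, H.symm.symm _ _ h.2⟩
  loopless := by
    constructor
    rintro (i | p) h
    · exact G.loopless.irrefl i h
    · exact H.loopless.irrefl p.2 h.2

/-- The family `{G ⊙ H : G ∈ 𝒢, H ∈ ℋ}` of corona products. -/
def coronaFam {V V' : Type*} (𝒢 : Set (SimpleGraph V)) (ℋ : Set (SimpleGraph V')) :
    Set (SimpleGraph (V ⊕ V × V')) :=
  {K | ∃ G ∈ 𝒢, ∃ H ∈ ℋ, K = corona G H}

/-- The join `G + H` of two (vertex-disjoint) graphs. -/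
def joinG {V₁ V₂ : Type*} (G : SimpleGraph V₁) (H : SimpleGraph V₂) :
    SimpleGraph (V₁ ⊕ V₂) where
  Adj x y :=
    match x, y with
    | Sum.inl a, Sum.inl b => G.Adj a b
    | Sum.inl _, Sum.inr _ => True
    | Sum.inr _, Sum.inl _ => True
    | Sum.inr a, Sum.inr b => H.Adj a b
  symm := by
    constructor
    rintro (a | a) (b | b) h
    · exact G.symm.symm _ _ h
    · trivial
    · trivial
    · exact H.symm.symm _ _ h
  loopless := by
    constructor
    rintro (a | a) h
    · exact G.loopless.irrefl a h
    · exact H.loopless.irrefl a h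

/-- The family `{G + H : G ∈ 𝒢, H ∈ ℋ}` of joins. -/
def joinFam {V₁ V₂ : Type*} (𝒢 : Set (SimpleGraph V₁)) (ℋ : Set (SimpleGraph V₂)) :
    Set (SimpleGraph (V₁ ⊕ V₂)) :=
  {K | ∃ G ∈ 𝒢, ∃ H ∈ ℋ, K = joinG G H}

/-- The family `𝒢_B(G)`: all graphs `G'` such that, for some permutation `f` of the
vertex set fixing `B` pointwise, `N_{G'}(x) = f(N_G(x))` for every `x ∈ B`. -/
def GBfam {V : Type*} (G : SimpleGraph V) (B : Set V) : Set (SimpleGraph V) :=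
  {G' | ∃ f : Equiv.Perm V, (∀ x ∈ B, f x = x) ∧
    ∀ x ∈ B, G'.neighborSet x = f '' (G.neighborSet x)}

/-!
In `G ⊙ H` with `G` connected all distances are explicit. A vertex of the copy `H_i` is at
distance `0`, `1` or `2` from a vertex of the same copy according as they are equal, adjacent
in `H` or not; every other distance is a `G`-distance plus `1` or `2`. So a vertex outside
`H_i` never distinguishes two vertices of `H_i`, while, as soon as every copy meets `S`, every
pair of vertices not lying in one copy is distinguished by a vertex of `S` in a copy. Hence `S`
is a metric generator of `G ⊙ H` exactly when it resolves every copy of `H` from within, a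
condition in which `G` does not occur.
-/

namespace SimpleGraph

variable {W : Type*} {K : SimpleGraph W} {f : W → ℕ}

theorem Walk.apply_le_apply_add_length (hf : ∀ x y, K.Adj x y → f y ≤ f x + 1) {u v : W}
    (p : K.Walk u v) : f v ≤ f u + p.length := by
  induction p with
  | nil => simp
  | cons h _ ih =>
    have := hf _ _ h
    rw [Walk.length_cons]
    omega

theorem Reachable.apply_le_apply_add_dist (hf : ∀ x y, K.Adj x y → f y ≤ f x + 1) {u v : W}
    (h : K.Reachable u v) : f v ≤ f u + K.dist u v := by
  obtain ⟨p, hp⟩ := h.exists_walk_length_eq_dist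
  simpa [hp] using p.apply_le_apply_add_length hf

end SimpleGraph

section Corona

variable {V V' : Type*} {G : SimpleGraph V} {H : SimpleGraph V'}

@[simp] lemma corona_adj_inl_inl {i j : V} :
    (corona G H).Adj (Sum.inl i) (Sum.inl j) ↔ G.Adj i j := Iff.rfl

@[simp] lemma corona_adj_inl_inr {i : V} {p : V × V'} :
    (corona G H).Adj (Sum.inl i) (Sum.inr p) ↔ i = p.1 := Iff.rfl

@[simp] lemma corona_adj_inr_inl {p : V × V'} {j : V} :
    (corona G H).Adj (Sum.inr p) (Sum.inl j) ↔ p.1 = j := Iff.rfl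

@[simp] lemma corona_adj_inr_inr {p q : V × V'} :
    (corona G H).Adj (Sum.inr p) (Sum.inr q) ↔ p.1 = q.1 ∧ H.Adj p.2 q.2 := Iff.rfl

def coronaInlHom (G : SimpleGraph V) (H : SimpleGraph V') : G →g corona G H :=
  ⟨Sum.inl, id⟩

lemma corona_connected (hG : G.Connected) : (corona G H).Connected := by
  have : Nonempty V := hG.nonempty
  have to_base : ∀ x, (corona G H).Reachable x (Sum.inl (Sum.elim id Prod.fst x)) := by
    rintro (i | ⟨i, a⟩)
    · rfl
    · exact SimpleGraph.Adj.reachable (by simp)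
  refine ⟨fun x y => (to_base x).trans (SimpleGraph.Reachable.trans ?_ (to_base y).symm)⟩
  exact (hG _ _).map (coronaInlHom G H)

/-- The function bounded here is `(corona G H).dist (Sum.inl j)`. -/
lemma corona_lipschitz_inl (j : V) :
    ∀ x y, (corona G H).Adj x y →
      Sum.elim (G.dist j) (fun p => G.dist j p.1 + 1) y ≤
        Sum.elim (G.dist j) (fun p => G.dist j p.1 + 1) x + 1 := by
  rintro (k | ⟨k, c⟩) (l | ⟨l, d⟩) hadj
  · have := (corona_adj_inl_inl.mp hadj).diff_dist_adj (u := j)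
    simp only [Sum.elim_inl]
    omega
  all_goals
    obtain rfl : k = l := by simp_all
    simp only [Sum.elim_inl, Sum.elim_inr]
    omega

/-- The function bounded here agrees with `(corona G H).dist (Sum.inr (i, a))` off the copy
`H_i` and vanishes on it. -/
lemma corona_lipschitz_inr [DecidableEq V] (i : V) :
    ∀ x y, (corona G H).Adj x y →
      Sum.elim (fun k => G.dist i k + 1) (fun p => if p.1 = i then 0 else G.dist i p.1 + 2) y ≤
        Sum.elim (fun k => G.dist i k + 1)
          (fun p => if p.1 = i then 0 else G.dist i p.1 + 2) x + 1 := by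
  rintro (k | ⟨k, c⟩) (l | ⟨l, d⟩) hadj
  · have := (corona_adj_inl_inl.mp hadj).diff_dist_adj (u := i)
    simp only [Sum.elim_inl]
    omega
  all_goals
    obtain rfl : k = l := by simp_all
    simp only [Sum.elim_inl, Sum.elim_inr]
    split_ifs <;> simp_all

lemma corona_dist_inl_inl (hG : G.Connected) (i j : V) :
    (corona G H).dist (Sum.inl i) (Sum.inl j) = G.dist i j := by
  refine le_antisymm ?_ ?_
  · obtain ⟨p, hp⟩ := hG.exists_walk_length_eq_dist i j
    have := SimpleGraph.dist_le (p.map (coronaInlHom G H))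
    rwa [SimpleGraph.Walk.length_map, hp] at this
  · simpa using ((corona_connected hG).preconnected (Sum.inl i) _).apply_le_apply_add_dist
      (corona_lipschitz_inl (H := H) i) (v := Sum.inl j)

lemma corona_dist_inl_inr (hG : G.Connected) (j i : V) (a : V') :
    (corona G H).dist (Sum.inl j) (Sum.inr (i, a)) = G.dist j i + 1 := by
  refine le_antisymm ?_ ?_
  · have hadj : (corona G H).Adj (Sum.inl i) (Sum.inr (i, a)) := by simp
    have := hadj.reachable.dist_triangle_right (Sum.inl j)
    rwa [corona_dist_inl_inl hG, SimpleGraph.dist_eq_one_iff_adj.mpr hadj] at this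
  · simpa using ((corona_connected hG).preconnected (Sum.inl j) _).apply_le_apply_add_dist
      (corona_lipschitz_inl (H := H) j) (v := Sum.inr (i, a))

lemma corona_dist_inr_inl (hG : G.Connected) (i : V) (c : V') (j : V) :
    (corona G H).dist (Sum.inr (i, c)) (Sum.inl j) = G.dist j i + 1 := by
  rw [SimpleGraph.dist_comm, corona_dist_inl_inr hG]

lemma corona_dist_inr_inr_of_ne (hG : G.Connected) {i j : V} (a b : V') (hij : i ≠ j) :
    (corona G H).dist (Sum.inr (i, a)) (Sum.inr (j, b)) = G.dist i j + 2 := by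
  refine le_antisymm ?_ ?_
  · have hadj : (corona G H).Adj (Sum.inr (i, a)) (Sum.inl i) := by simp
    have := hadj.reachable.dist_triangle_left (Sum.inr (j, b))
    rw [corona_dist_inl_inr hG, SimpleGraph.dist_eq_one_iff_adj.mpr hadj] at this
    omega
  · classical
    simpa [hij.symm] using
      ((corona_connected hG).preconnected (Sum.inr (i, a)) _).apply_le_apply_add_dist
        (corona_lipschitz_inr (H := H) i) (v := Sum.inr (j, b))

open Classical in
/-- The distance between `c` and `a` inside one copy of `H` in a corona, i.e. in `K₁ + H`. -/
noncomputable def coneDist (H : SimpleGraph V') (c a : V') : ℕ :=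
  if c = a then 0 else if H.Adj c a then 1 else 2

lemma coneDist_le_two (c a : V') : coneDist H c a ≤ 2 := by
  unfold coneDist
  split_ifs <;> omega

lemma corona_dist_inr_inr_self (hG : G.Connected) (i : V) (c a : V') :
    (corona G H).dist (Sum.inr (i, c)) (Sum.inr (i, a)) = coneDist H c a := by
  have hreach := (corona_connected (H := H) hG).preconnected (Sum.inr (i, c)) (Sum.inr (i, a))
  unfold coneDist
  split_ifs with hca hadj
  · simp [hca]
  · simpa using hadj
  · refine le_antisymm ?_ (hreach.one_lt_dist_of_ne_of_not_adj (by simpa) (by simpa))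
    have hadj' : (corona G H).Adj (Sum.inr (i, c)) (Sum.inl i) := by simp
    have := hadj'.reachable.dist_triangle_left (Sum.inr (i, a))
    rwa [corona_dist_inl_inr hG, SimpleGraph.dist_self,
      SimpleGraph.dist_eq_one_iff_adj.mpr hadj'] at this

def ResolvesCopies (H : SimpleGraph V') (S : Set (V ⊕ V × V')) : Prop :=
  ∀ (i : V) (a b : V'), a ≠ b → ∃ c, Sum.inr (i, c) ∈ S ∧ coneDist H c a ≠ coneDist H c b

lemma ResolvesCopies.exists_mem [Nontrivial V'] {S : Set (V ⊕ V × V')}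
    (hS : ResolvesCopies H S) (i : V) : ∃ c, Sum.inr (i, c) ∈ S := by
  obtain ⟨a, b, hab⟩ := exists_pair_ne V'
  obtain ⟨c, hc, -⟩ := hS i a b hab
  exact ⟨c, hc⟩

lemma resolvesCopies_of_isMetricGen_corona (hG : G.Connected) {S : Set (V ⊕ V × V')}
    (hS : IsMetricGen (corona G H) S) : ResolvesCopies H S := by
  intro i a b hab
  obtain ⟨s | ⟨k, c⟩, hs, hd⟩ := hS (Sum.inr (i, a)) (Sum.inr (i, b)) (by simpa using hab)
  · simp [corona_dist_inl_inr hG] at hd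
  · obtain rfl | hki := eq_or_ne k i
    · rw [corona_dist_inr_inr_self hG, corona_dist_inr_inr_self hG] at hd
      exact ⟨c, hs, hd⟩
    · simp [corona_dist_inr_inr_of_ne hG _ _ hki] at hd

lemma ResolvesCopies.exists_dist_inl_ne_dist_inr [Nontrivial V] [Nontrivial V']
    (hG : G.Connected) {S : Set (V ⊕ V × V')} (hS : ResolvesCopies H S) (i j : V) (b : V') :
    ∃ s ∈ S, (corona G H).dist s (Sum.inl i) ≠ (corona G H).dist s (Sum.inr (j, b)) := by
  obtain rfl | hij := eq_or_ne i j
  · obtain ⟨k, hk⟩ := exists_ne i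
    obtain ⟨c, hc⟩ := hS.exists_mem k
    refine ⟨_, hc, ?_⟩
    rw [corona_dist_inr_inl hG, corona_dist_inr_inr_of_ne hG _ _ hk, SimpleGraph.dist_comm]
    omega
  · obtain ⟨c, hc⟩ := hS.exists_mem i
    refine ⟨_, hc, ?_⟩
    rw [corona_dist_inr_inl hG, corona_dist_inr_inr_of_ne hG _ _ hij, SimpleGraph.dist_self]
    omega

lemma isMetricGen_corona_of_resolvesCopies [Nontrivial V] [Nontrivial V'] (hG : G.Connected)
    {S : Set (V ⊕ V × V')} (hS : ResolvesCopies H S) : IsMetricGen (corona G H) S := by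
  rintro (i | ⟨i, a⟩) (j | ⟨j, b⟩) huv
  · obtain ⟨c, hc⟩ := hS.exists_mem i
    refine ⟨_, hc, ?_⟩
    have := hG.pos_dist_of_ne (u := j) (v := i) (by simpa [eq_comm] using huv)
    rw [corona_dist_inr_inl hG, corona_dist_inr_inl hG, SimpleGraph.dist_self]
    omega
  · exact hS.exists_dist_inl_ne_dist_inr hG i j b
  · obtain ⟨s, hs, hd⟩ := hS.exists_dist_inl_ne_dist_inr hG j i a
    exact ⟨s, hs, hd.symm⟩
  · obtain rfl | hij := eq_or_ne i j
    · obtain ⟨c, hc, hd⟩ := hS i a b (by simpa using huv)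
      refine ⟨_, hc, ?_⟩
      rwa [corona_dist_inr_inr_self hG, corona_dist_inr_inr_self hG]
    · obtain ⟨c, hc⟩ := hS.exists_mem i
      refine ⟨_, hc, ?_⟩
      have := coneDist_le_two (H := H) c a
      have := hG.pos_dist_of_ne hij
      rw [corona_dist_inr_inr_self hG, corona_dist_inr_inr_of_ne hG _ _ hij]
      omega

lemma isMetricGen_corona_iff [Nontrivial V] [Nontrivial V'] (hG : G.Connected)
    {S : Set (V ⊕ V × V')} : IsMetricGen (corona G H) S ↔ ResolvesCopies H S :=
  ⟨resolvesCopies_of_isMetricGen_corona hG, isMetricGen_corona_of_resolvesCopies hG⟩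

lemma isSimMetricGen_coronaFam_iff [Nontrivial V] [Nontrivial V'] {𝒢 : Set (SimpleGraph V)}
    (h𝒢 : ∀ G ∈ 𝒢, G.Connected) (hne : 𝒢.Nonempty) {ℋ : Set (SimpleGraph V')}
    {S : Set (V ⊕ V × V')} :
    IsSimMetricGen (coronaFam 𝒢 ℋ) S ↔ ∀ H ∈ ℋ, ResolvesCopies H S := by
  obtain ⟨G₀, hG₀⟩ := hne
  constructor
  · intro hS H hH
    exact (isMetricGen_corona_iff (h𝒢 G₀ hG₀)).mp (hS _ ⟨G₀, hG₀, H, hH, rfl⟩)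
  · rintro hS _ ⟨G, hG, H, hH, rfl⟩
    exact (isMetricGen_corona_iff (h𝒢 G hG)).mpr (hS H hH)

end Corona

theorem statement_1_general {V V' : Type*} [Nontrivial V] [Nontrivial V']
    (𝒢 : Set (SimpleGraph V)) (h𝒢 : ∀ G ∈ 𝒢, G.Connected)
    (ℋ : Set (SimpleGraph V'))
    (G : SimpleGraph V) (hG : G ∈ 𝒢) :
    Sd (coronaFam 𝒢 ℋ) = Sd (coronaFam {G} ℋ) := by
  have h𝒢G : ∀ G' ∈ ({G} : Set (SimpleGraph V)), G'.Connected := by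
    simpa using h𝒢 G hG
  have hgen : ∀ S, IsSimMetricGen (coronaFam 𝒢 ℋ) S ↔ IsSimMetricGen (coronaFam {G} ℋ) S :=
    fun S => (isSimMetricGen_coronaFam_iff h𝒢 ⟨G, hG⟩).trans
      (isSimMetricGen_coronaFam_iff h𝒢G (Set.singleton_nonempty G)).symm
  simp only [Sd, hgen]

theorem statement_1 {V V' : Type*} [Fintype V] [Fintype V'] [Nontrivial V] [Nontrivial V']
    (𝒢 : Set (SimpleGraph V)) (h𝒢 : ∀ G ∈ 𝒢, G.Connected)
    (ℋ : Set (SimpleGraph V'))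
    (G : SimpleGraph V) (hG : G ∈ 𝒢) :
    Sd (coronaFam 𝒢 ℋ) = Sd (coronaFam {G} ℋ) :=
  statement_1_general 𝒢 h𝒢 ℋ G hG
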